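/- arXiv:2406.16313 — 2 statements merged into one kernel-verified Lean document; each statement's English description precedes it below -/
import Mathlib

section
/- Let Y be a (p,k)-source, ε > 0, and let t, q be positive integers with t ≥ q and q ≤ k − log₂ t − 2·log₂(1/ε) − 5. Suppose f: {0,1}^p → {0,1}^q is sampled uniformly at random from a 2t-wise independent family of functions. Then f(Y) ≈_ε U_q holds with probability at least 1 − 2^{−t} over the choice of f. -/
/-!
Fix an output `z` and write the deviation `push f Y z - 2^{-q}` as `∑ y, Y y * Z (f y)` with
`Z v = [v = z] - 2^{-q}`. Its `2t`-th moment over `f` expands into a sum over `2t`-tuples `g` of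
source points. By `2t`-wise independence each term factors over the distinct values of `g` into
moments of `Z` at a uniform point: the first moment vanishes, so tuples with a value of
multiplicity one contribute nothing, and every other factor is at most `2^{-q}`. Since
`Y ≤ 2^{-k}`, tuples with `m ≤ t` distinct values carry `Y`-mass at most
`2^{2t} (2t 2^{-k})^{2t-m}`, which bounds the moment by `2^{2t} (2^{-q} 2t 2^{-k})^t`. Markov's
inequality at `δ = 2ε 2^{-q}` and a union bound over the `2^q` outputs leave a `2^{-t}` fraction of
bad `f`; for every other `f` all deviations are at most `δ`, so the statistical distance is at
most `2^q δ / 2 = ε`.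
-/

open Finset
open scoped Classical

abbrev BS (n : ℕ) : Type := Fin n → Bool

def IsDist {S : Type*} [Fintype S] (p : S → ℝ) : Prop :=
  (∀ s, 0 ≤ p s) ∧ ∑ s, p s = 1

noncomputable def statDist {S : Type*} [Fintype S] (p q : S → ℝ) : ℝ :=
  (∑ s, |p s - q s|) / 2

noncomputable def push {S T : Type*} [Fintype S] [DecidableEq T] (f : S → T)
    (p : S → ℝ) : T → ℝ :=
  fun t => ∑ s, if f s = t then p s else 0

noncomputable def unif (m : ℕ) : BS m → ℝ := fun _ => 1 / 2 ^ m

/-- A finite family `F` of functions `{0,1}^p → {0,1}^q` is `t`-wise independent if,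
for a uniformly random member of `F`, the values at any `t` distinct points are
independent and uniformly distributed, i.e. every tuple of values occurs with
probability exactly `(2^q)^{-t}`. -/
def TwiseIndep (p q t : ℕ) (F : Finset (BS p → BS q)) : Prop :=
  F.Nonempty ∧
  ∀ xs : Fin t → BS p, Function.Injective xs → ∀ vs : Fin t → BS q,
    ((F.filter (fun f => ∀ i, f (xs i) = vs i)).card : ℝ) / (F.card : ℝ) =
      1 / ((2:ℝ) ^ q) ^ t

theorem card_BS (n : ℕ) : Fintype.card (BS n) = 2 ^ n := by simp

theorem IsDist.one_le_card_mul_of_le {S : Type*} [Fintype S] {Y : S → ℝ} (hY : IsDist Y) {N : ℝ}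
    (hN : ∀ s, Y s ≤ N) : 1 ≤ Fintype.card S * N := by
  simpa [← hY.2] using sum_le_sum fun s (_ : s ∈ univ) => hN s

theorem IsDist.nonneg_of_le {S : Type*} [Fintype S] {Y : S → ℝ} (hY : IsDist Y) {N : ℝ}
    (hN : ∀ s, Y s ≤ N) : 0 ≤ N := by
  have := hY.one_le_card_mul_of_le hN
  by_contra h
  nlinarith [(Nat.cast_nonneg (Fintype.card S) : (0 : ℝ) ≤ _)]

theorem isDist_push {S T : Type*} [Fintype S] [Fintype T] [DecidableEq T] {Y : S → ℝ}
    (hY : IsDist Y) (f : S → T) : IsDist (push f Y) := by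
  refine ⟨fun t => sum_nonneg fun s _ => ?_, ?_⟩
  · split_ifs
    exacts [hY.1 s, le_rfl]
  · simp only [push]
    rw [sum_comm]
    simpa using hY.2

theorem isDist_unif (m : ℕ) : IsDist (unif m) :=
  ⟨fun _ => by simp [unif], by simp [unif]⟩

theorem statDist_le_one {S : Type*} [Fintype S] {P Q : S → ℝ} (hP : IsDist P) (hQ : IsDist Q) :
    statDist P Q ≤ 1 := by
  have h : ∑ s, |P s - Q s| ≤ ∑ s, (P s + Q s) :=
    sum_le_sum fun s _ => (abs_sub _ _).trans <| by
      rw [abs_of_nonneg (hP.1 s), abs_of_nonneg (hQ.1 s)]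
  rw [sum_add_distrib, hP.2, hQ.2] at h
  rw [statDist]
  linarith

theorem statDist_le_of_forall_abs_sub_le {S : Type*} [Fintype S] {P Q : S → ℝ} {c : ℝ}
    (h : ∀ s, |P s - Q s| ≤ c) : statDist P Q ≤ Fintype.card S * c / 2 := by
  have := sum_le_sum fun s (_ : s ∈ univ) => h s
  rw [statDist]
  simp only [sum_const, card_univ, nsmul_eq_mul] at this
  linarith

theorem card_filter_not_statDist_le_le_sum {β S : Type*} [Fintype S] (F : Finset β)
    (P : β → S → ℝ) (Q : S → ℝ) {c ε : ℝ} (hcε : Fintype.card S * c / 2 ≤ ε) :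
    #(F.filter fun f => ¬ statDist (P f) Q ≤ ε) ≤ ∑ s, #(F.filter fun f => c < |P f s - Q s|) := by
  refine (card_le_card fun f hf => ?_).trans card_biUnion_le
  obtain ⟨hfF, hfε⟩ := mem_filter.mp hf
  by_contra hfs
  refine hfε ((statDist_le_of_forall_abs_sub_le fun s => ?_).trans hcε)
  by_contra h
  exact hfs (mem_biUnion.mpr ⟨s, mem_univ _, mem_filter.mpr ⟨hfF, not_le.mp h⟩⟩)

theorem one_sub_le_card_filter_div {α : Type*} {F : Finset α} (P : α → Prop) [DecidablePred P]
    {x : ℝ} (hF : F.Nonempty) (h : (#(F.filter fun f => ¬ P f) : ℝ) ≤ #F * x) :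
    1 - x ≤ (#(F.filter P) : ℝ) / #F := by
  have hF0 : (0 : ℝ) < #F := by exact_mod_cast hF.card_pos
  have hsplit : (#(F.filter P) : ℝ) + #(F.filter fun f => ¬ P f) = #F := by
    exact_mod_cast card_filter_add_card_filter_not P
  rw [le_div_iff₀ hF0]
  linarith

theorem card_filter_lt_abs_mul_pow_le {β : Type*} (F : Finset β) (X : β → ℝ) {δ : ℝ}
    (hδ : 0 ≤ δ) (m : ℕ) :
    #(F.filter fun f => δ < |X f|) * δ ^ (2 * m) ≤ ∑ f ∈ F, X f ^ (2 * m) := by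
  have hX : ∀ f, 0 ≤ X f ^ (2 * m) := fun f => (even_two_mul m).pow_nonneg _
  calc #(F.filter fun f => δ < |X f|) * δ ^ (2 * m)
      = ∑ _f ∈ F.filter fun f => δ < |X f|, δ ^ (2 * m) := by rw [sum_const, nsmul_eq_mul]
    _ ≤ ∑ f ∈ F.filter fun f => δ < |X f|, X f ^ (2 * m) := by
        refine sum_le_sum fun f hf => ?_
        calc δ ^ (2 * m) ≤ |X f| ^ (2 * m) := pow_le_pow_left₀ hδ (mem_filter.mp hf).2.le _
          _ = X f ^ (2 * m) := (even_two_mul m).pow_abs _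
    _ ≤ ∑ f ∈ F, X f ^ (2 * m) :=
        sum_le_sum_of_subset_of_nonneg (filter_subset _ _) fun f _ _ => hX f

theorem two_pow_mul_pow_le_of_sixteen_mul_le {q t : ℕ} (htq : q ≤ t) {ε μ a : ℝ} (hμ : 0 ≤ μ)
    (ha0 : 0 ≤ a) (ha : 16 * a ≤ ε ^ 2 * μ) :
    2 ^ q * (2 ^ (2 * t) * (μ ^ t * a ^ t)) ≤ (2 ^ t)⁻¹ * (2 * ε * μ) ^ (2 * t) := by
  calc 2 ^ q * (2 ^ (2 * t) * (μ ^ t * a ^ t))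
      ≤ 2 ^ t * (2 ^ (2 * t) * (μ ^ t * a ^ t)) := by
        gcongr
        norm_num
    _ = (8 * μ * a) ^ t := by
        rw [pow_mul, ← mul_pow, ← mul_pow, ← mul_pow]
        ring_nf
    _ ≤ (2 * ε ^ 2 * μ ^ 2) ^ t :=
        pow_le_pow_left₀ (by positivity) (by nlinarith [mul_le_mul_of_nonneg_left ha hμ]) t
    _ = (2 ^ t)⁻¹ * (2 * ε * μ) ^ (2 * t) := by
        rw [pow_mul, ← inv_pow, ← mul_pow]
        congr 1
        ring

theorem mul_rpow_neg_le_of_le_sub_logb {q t : ℕ} {k ε : ℝ} (hε : 0 < ε) (ht : 0 < t)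
    (hk : (q : ℝ) ≤ k - Real.logb 2 t - 2 * Real.logb 2 (1 / ε) - 5) :
    32 * t * (2 : ℝ) ^ (-k) ≤ ε ^ 2 * (2 ^ q)⁻¹ := by
  have hlhs : 32 * t * (2 : ℝ) ^ (-k) = 2 ^ (5 + Real.logb 2 t + -k) := by
    rw [Real.rpow_add two_pos, Real.rpow_add two_pos, Real.rpow_logb two_pos one_lt_two.ne'
      (by exact_mod_cast ht)]
    norm_num
  have hrhs : ε ^ 2 * (2 ^ q : ℝ)⁻¹ = 2 ^ (Real.logb 2 ε * 2 + -q) := by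
    rw [Real.rpow_add two_pos, Real.rpow_mul two_pos.le, Real.rpow_logb two_pos one_lt_two.ne'
      hε, Real.rpow_neg two_pos.le, Real.rpow_natCast, Real.rpow_two]
  rw [one_div, Real.logb_inv] at hk
  rw [hlhs, hrhs]
  exact Real.rpow_le_rpow_of_exponent_le one_le_two (by linarith)

theorem pow_mul_pow_two_mul_sub_le {a b : ℝ} (ha : 0 ≤ a) (hab : a ≤ b) {m n : ℕ} (hmn : m ≤ n) :
    b ^ m * a ^ (2 * n - m) ≤ b ^ n * a ^ n := by
  calc b ^ m * a ^ (2 * n - m) = b ^ m * a ^ (n - m) * a ^ n := by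
        rw [mul_assoc, ← pow_add]
        congr 2
        omega
    _ ≤ b ^ m * b ^ (n - m) * a ^ n := by
        have hb : 0 ≤ b := ha.trans hab
        gcongr
    _ = b ^ n * a ^ n := by rw [← pow_add, Nat.add_sub_cancel' hmn]

section fibers

variable {ι α : Type*} [Fintype ι] [DecidableEq α]

theorem one_le_card_fiber_of_mem_image {g : ι → α} {y : α} (hy : y ∈ univ.image g) :
    1 ≤ #{i | g i = y} := by
  obtain ⟨i, -, hi⟩ := mem_image.mp hy
  exact card_pos.mpr ⟨i, by simp [hi]⟩

theorem two_mul_card_image_le {g : ι → α} (hg : ∀ y, #{i | g i = y} ≠ 1) :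
    2 * #(univ.image g) ≤ Fintype.card ι := by
  rw [← card_univ, card_eq_sum_card_image g univ, mul_comm, ← smul_eq_mul, ← sum_const]
  refine sum_le_sum fun y hy => ?_
  have := one_le_card_fiber_of_mem_image hy
  have := hg y
  omega

theorem exists_card_eq_card_image_forall_mem_image (g : ι → α) :
    ∃ s : Finset ι, #s = #(univ.image g) ∧ ∀ i, g i ∈ s.image g := by
  obtain ⟨s, -, hinj, himg⟩ :=
    exists_subset_injOn_image_eq_of_surjOn Set.univ (univ.image g) fun y hy => by simpa using hy
  exact ⟨s, by rw [← himg, card_image_of_injOn hinj], fun i => by simp [himg]⟩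

-- Each coordinate outside `s` must take one of the at most `#s` values taken on `s`, a set of
-- `Y`-mass at most `#s * N`.
theorem sum_prod_le_of_forall_mem_image [DecidableEq ι] [Fintype α] {Y : α → ℝ} (hY : IsDist Y)
    {N : ℝ} (hN : ∀ a, Y a ≤ N) (s : Finset ι) :
    ∑ g : ι → α with ∀ i, g i ∈ s.image g, ∏ i, Y (g i) ≤ (#s * N) ^ #sᶜ := by
  let e := Equiv.piEquivPiSubtypeProd (· ∈ s) (fun _ : ι => α)
  let A : (s → α) × ({j // j ∉ s} → α) → ℝ := fun x =>
    (∏ i, Y (x.1 i)) * ∏ j, if x.2 j ∈ univ.image x.1 then Y (x.2 j) else 0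
  have hA : ∀ g : ι → α, (if ∀ i, g i ∈ s.image g then ∏ i, Y (g i) else 0) = A (e g) := by
    intro g
    have himg : s.image g = univ.image fun i : s => g i := by ext; simp
    have hcond : (∀ i, g i ∈ s.image g) ↔ ∀ j : {j // j ∉ s}, g j ∈ s.image g :=
      ⟨fun h j => h j, fun h i => if hi : i ∈ s then mem_image_of_mem g hi else h ⟨i, hi⟩⟩
    simp only [A, e, Equiv.piEquivPiSubtypeProd_apply, prod_ite_zero, mem_univ, true_implies,
      ← himg, ← hcond, mul_ite, mul_zero]
    congr 1
    convert (Fintype.prod_subtype_mul_prod_subtype (· ∈ s) fun i => Y (g i)).symm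
  have hN0 : 0 ≤ N := hY.nonneg_of_le hN
  have hfiber : ∀ u : s → α, ∑ a ∈ univ.image u, Y a ≤ #s * N := fun u =>
    calc ∑ a ∈ univ.image u, Y a ≤ #(univ.image u) * N := by
          simpa using sum_le_card_nsmul _ _ _ fun a _ => hN a
      _ ≤ #s * N := by
          gcongr
          simpa using card_image_le (s := (univ : Finset s)) (f := u)
  calc ∑ g : ι → α with ∀ i, g i ∈ s.image g, ∏ i, Y (g i)
      = ∑ x, A x := by
        rw [sum_filter]
        simp_rw [hA]
        exact e.sum_comp A
    _ = ∑ u : s → α, (∏ i, Y (u i)) * ∏ _j : {j // j ∉ s}, ∑ a ∈ univ.image u, Y a := by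
        rw [Fintype.sum_prod_type]
        refine sum_congr rfl fun u _ => ?_
        simp only [A, ← mul_sum]
        rw [← Fintype.prod_sum fun (_ : {j // j ∉ s}) a => if a ∈ univ.image u then Y a else 0]
        simp only [sum_ite_mem, univ_inter]
    _ ≤ ∑ u : s → α, (∏ i, Y (u i)) * (#s * N) ^ #sᶜ := by
        refine sum_le_sum fun u _ => mul_le_mul_of_nonneg_left ?_ (prod_nonneg fun i _ => hY.1 _)
        calc ∏ _j : {j // j ∉ s}, ∑ a ∈ univ.image u, Y a
            ≤ ∏ _j : {j // j ∉ s}, (#s * N : ℝ) :=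
              prod_le_prod (fun _ _ => sum_nonneg fun a _ => hY.1 a) fun _ _ => hfiber u
          _ = (#s * N) ^ #sᶜ := by simp [card_compl]
    _ = (#s * N) ^ #sᶜ := by
        rw [← sum_mul, ← Fintype.prod_sum]
        simp [hY.2]

-- A tuple without singleton fibres has a set of fibre representatives of size at most `t`.
theorem sum_prod_mul_pow_card_image_le_sum_finset [DecidableEq ι] [Fintype α] {t : ℕ}
    (hι : Fintype.card ι ≤ 2 * t) {Y : α → ℝ} (hY : ∀ a, 0 ≤ Y a) {μ : ℝ} (hμ : 0 ≤ μ) :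
    ∑ g : ι → α with ∀ y, #{i | g i = y} ≠ 1, (∏ i, Y (g i)) * μ ^ #(univ.image g) ≤
      ∑ s : Finset ι with #s ≤ t, μ ^ #s * ∑ g : ι → α with ∀ i, g i ∈ s.image g, ∏ i, Y (g i) := by
  let term : Finset ι → (ι → α) → ℝ := fun s g =>
    if ∀ i, g i ∈ s.image g then (∏ i, Y (g i)) * μ ^ #s else 0
  have hterm : ∀ s g, 0 ≤ term s g := fun s g => by
    unfold term
    split_ifs
    exacts [mul_nonneg (prod_nonneg fun i _ => hY _) (pow_nonneg hμ _), le_rfl]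
  calc ∑ g : ι → α with ∀ y, #{i | g i = y} ≠ 1, (∏ i, Y (g i)) * μ ^ #(univ.image g)
      ≤ ∑ g : ι → α, ∑ s : Finset ι with #s ≤ t, term s g := by
        rw [sum_filter]
        refine sum_le_sum fun g _ => ?_
        split_ifs with hg
        · obtain ⟨s, hs, hgs⟩ := exists_card_eq_card_image_forall_mem_image g
          have hst : #s ≤ t := by
            have := two_mul_card_image_le hg
            omega
          calc (∏ i, Y (g i)) * μ ^ #(univ.image g) = term s g := by
                simp only [term, if_pos hgs, hs]
            _ ≤ ∑ s : Finset ι with #s ≤ t, term s g :=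
                single_le_sum (fun s _ => hterm s g) (mem_filter.mpr ⟨mem_univ s, hst⟩)
        · exact sum_nonneg fun s _ => hterm s g
    _ = _ := by
        rw [sum_comm]
        refine sum_congr rfl fun s _ => ?_
        rw [sum_filter, mul_sum]
        refine sum_congr rfl fun g _ => ?_
        simp only [term, mul_ite, mul_zero, mul_comm]

theorem sum_prod_mul_pow_card_image_le [DecidableEq ι] [Fintype α] {t : ℕ}
    (hι : Fintype.card ι = 2 * t) {Y : α → ℝ} (hY : IsDist Y) {N μ : ℝ} (hN : ∀ a, Y a ≤ N)
    (hNμ : 2 * t * N ≤ μ) :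
    ∑ g : ι → α with ∀ y, #{i | g i = y} ≠ 1, (∏ i, Y (g i)) * μ ^ #(univ.image g) ≤
      2 ^ (2 * t) * (μ ^ t * (2 * t * N) ^ t) := by
  have hN0 : 0 ≤ N := hY.nonneg_of_le hN
  have hμ0 : 0 ≤ μ := (mul_nonneg (by positivity) hN0).trans hNμ
  calc _ ≤ ∑ s : Finset ι with #s ≤ t,
          μ ^ #s * ∑ g : ι → α with ∀ i, g i ∈ s.image g, ∏ i, Y (g i) :=
        sum_prod_mul_pow_card_image_le_sum_finset hι.le hY.1 hμ0
    _ ≤ ∑ s : Finset ι with #s ≤ t, μ ^ t * (2 * t * N) ^ t := by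
        refine sum_le_sum fun s hs => ?_
        have hst : #s ≤ t := (mem_filter.mp hs).2
        calc μ ^ #s * ∑ g : ι → α with ∀ i, g i ∈ s.image g, ∏ i, Y (g i)
            ≤ μ ^ #s * (#s * N) ^ #sᶜ :=
              mul_le_mul_of_nonneg_left (sum_prod_le_of_forall_mem_image hY hN s)
                (pow_nonneg hμ0 _)
          _ ≤ μ ^ #s * (2 * t * N) ^ (2 * t - #s) := by
              rw [card_compl, hι]
              refine mul_le_mul_of_nonneg_left (pow_le_pow_left₀ (by positivity) ?_ _)
                (pow_nonneg hμ0 _)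
              gcongr
              exact_mod_cast hst.trans (by omega)
          _ ≤ μ ^ t * (2 * t * N) ^ t := pow_mul_pow_two_mul_sub_le (by positivity) hNμ hst
    _ ≤ 2 ^ (2 * t) * (μ ^ t * (2 * t * N) ^ t) := by
        rw [sum_const, nsmul_eq_mul]
        refine mul_le_mul_of_nonneg_right ?_ (by positivity)
        calc (#({s | #s ≤ t} : Finset (Finset ι)) : ℝ) ≤ Fintype.card (Finset ι) := by
              exact_mod_cast card_le_univ _
          _ = 2 ^ (2 * t) := by simp [Fintype.card_finset, hι]

end fibers

noncomputable def centeredIndicator (q : ℕ) (z v : BS q) : ℝ :=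
  (if v = z then 1 else 0) - unif q v

noncomputable def centeredMoment (q : ℕ) (z : BS q) (j : ℕ) : ℝ :=
  (∑ v, centeredIndicator q z v ^ j) / 2 ^ q

section centered

variable {q : ℕ} (z : BS q)

theorem push_sub_unif_eq_sum {p : ℕ} (f : BS p → BS q) {Y : BS p → ℝ} (hY : ∑ y, Y y = 1) :
    push f Y z - unif q z = ∑ y, Y y * centeredIndicator q z (f y) := by
  simp only [centeredIndicator, mul_sub, sum_sub_distrib, unif, ← sum_mul, hY, one_mul, push,
    mul_ite, mul_one, mul_zero]

theorem sum_centeredIndicator : ∑ v, centeredIndicator q z v = 0 := by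
  simp [centeredIndicator, sum_sub_distrib, (isDist_unif q).2]

theorem abs_centeredIndicator_le_one (v : BS q) : |centeredIndicator q z v| ≤ 1 := by
  have h0 : 0 < unif q v := by simp [unif]
  have h1 : unif q v ≤ 1 := by simpa [unif] using inv_le_one_of_one_le₀ (one_le_pow₀ one_le_two)
  rw [centeredIndicator, abs_le]
  split_ifs <;> constructor <;> linarith

theorem sum_centeredIndicator_sq : ∑ v, centeredIndicator q z v ^ 2 = 1 - (2 ^ q : ℝ)⁻¹ := by
  calc ∑ v, centeredIndicator q z v ^ 2
      = ∑ v, ((if v = z then centeredIndicator q z v else 0) -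
          (2 ^ q : ℝ)⁻¹ * centeredIndicator q z v) := by
        refine sum_congr rfl fun v _ => ?_
        rw [sq]
        nth_rw 2 [centeredIndicator]
        split_ifs <;> simp [unif] <;> ring
    _ = 1 - (2 ^ q : ℝ)⁻¹ := by
        rw [sum_sub_distrib, ← mul_sum, sum_centeredIndicator, sum_ite_eq']
        simp [centeredIndicator, unif]

theorem centeredMoment_one : centeredMoment q z 1 = 0 := by
  simp [centeredMoment, sum_centeredIndicator]

theorem abs_centeredMoment_le {j : ℕ} (hj : 1 ≤ j) : |centeredMoment q z j| ≤ (2 ^ q : ℝ)⁻¹ := by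
  obtain rfl | hj2 := hj.eq_or_lt
  · simp [centeredMoment_one]
  have hsum : |∑ v, centeredIndicator q z v ^ j| ≤ 1 :=
    calc |∑ v, centeredIndicator q z v ^ j|
        ≤ ∑ v, |centeredIndicator q z v| ^ j := by
          simpa only [abs_pow] using abs_sum_le_sum_abs (fun v => centeredIndicator q z v ^ j) univ
      _ ≤ ∑ v, |centeredIndicator q z v| ^ 2 :=
          sum_le_sum fun v _ => pow_le_pow_of_le_one (abs_nonneg _)
            (abs_centeredIndicator_le_one z v) hj2
      _ ≤ 1 := by
          simp only [sq_abs, sum_centeredIndicator_sq]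
          linarith [show (0 : ℝ) ≤ (2 ^ q)⁻¹ by positivity]
  rw [centeredMoment, abs_div, abs_of_pos (by positivity : (0 : ℝ) < 2 ^ q), div_eq_mul_inv]
  exact mul_le_of_le_one_left (by positivity) hsum

end centered

namespace TwiseIndep

variable {p q n : ℕ} {F : Finset (BS p → BS q)}

theorem card_filter_eq (hF : TwiseIndep p q n F) {ι : Type*} [Fintype ι]
    (hι : Fintype.card ι = n) {xs : ι → BS p} (hxs : Function.Injective xs) (vs : ι → BS q) :
    (#(F.filter fun f => (fun i => f (xs i)) = vs) : ℝ) = #F / ((2 : ℝ) ^ q) ^ n := by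
  have hF0 : (#F : ℝ) ≠ 0 := by exact_mod_cast hF.1.card_pos.ne'
  let e : ι ≃ Fin n := Fintype.equivFinOfCardEq hι
  have h := hF.2 (xs ∘ e.symm) (hxs.comp e.symm.injective) (vs ∘ e.symm)
  have hfilter : (F.filter fun f => (fun i => f (xs i)) = vs) =
      F.filter fun f => ∀ i, f ((xs ∘ e.symm) i) = (vs ∘ e.symm) i := by
    refine filter_congr fun f _ => ?_
    rw [funext_iff, ← e.symm.forall_congr_right]
    rfl
  rw [hfilter]
  field_simp at h ⊢
  linarith

theorem sum_prod_eq (hF : TwiseIndep p q n F) {ι : Type*} [Fintype ι] [DecidableEq ι]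
    (hι : Fintype.card ι = n) {xs : ι → BS p} (hxs : Function.Injective xs)
    (h : ι → BS q → ℝ) :
    ∑ f ∈ F, ∏ i, h i (f (xs i)) = #F * ∏ i, (∑ v, h i v) / 2 ^ q := by
  calc ∑ f ∈ F, ∏ i, h i (f (xs i))
      = ∑ f ∈ F, ∑ vs : ι → BS q, if (fun i => f (xs i)) = vs then ∏ i, h i (vs i) else 0 := by
        simp
    _ = ∑ vs : ι → BS q, #(F.filter fun f => (fun i => f (xs i)) = vs) * ∏ i, h i (vs i) := by
        rw [sum_comm]
        simp [sum_ite, sum_const, nsmul_eq_mul]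
    _ = #F * ∏ i, (∑ v, h i v) / 2 ^ q := by
        simp_rw [hF.card_filter_eq hι hxs, prod_div_distrib, Fintype.prod_sum, prod_const,
          card_univ, hι]
        rw [← mul_sum]
        ring

-- Padding the image of `g` with points of multiplicity `0` to exactly `n` points reduces this to
-- `sum_prod_eq`.
theorem sum_prod_comp_eq (hF : TwiseIndep p q n F) (hn : n ≤ 2 ^ p) {ι : Type*} [Fintype ι]
    (g : ι → BS p) (hg : #(univ.image g) ≤ n) (h : BS q → ℝ) :
    ∑ f ∈ F, ∏ i, h (f (g i)) =
      #F * ∏ y ∈ univ.image g, (∑ v, h v ^ #{i | g i = y}) / 2 ^ q := by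
  obtain ⟨s, hgs, hs⟩ := exists_superset_card_eq hg (by simpa using hn)
  have hzero : ∀ y ∈ s, y ∉ univ.image g → #{i | g i = y} = 0 := by
    intro y _ hy
    simp_all
  have hextend : ∀ φ : BS p → ℕ → ℝ, (∀ y, φ y 0 = 1) →
      ∏ y ∈ univ.image g, φ y #{i | g i = y} = ∏ y : s, φ y #{i | g i = y} := by
    intro φ hφ
    rw [prod_coe_sort s (fun y => φ y #{i | g i = y})]
    exact prod_subset hgs fun y hy hyg => by rw [hzero y hy hyg, hφ]
  calc ∑ f ∈ F, ∏ i, h (f (g i))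
      = ∑ f ∈ F, ∏ y : s, h (f y) ^ #{i | g i = y} := by
        refine sum_congr rfl fun f _ => ?_
        rw [prod_comp (fun y => h (f y)), hextend _ fun _ => pow_zero _]
    _ = #F * ∏ y : s, (∑ v, h v ^ #{i | g i = y}) / 2 ^ q :=
        hF.sum_prod_eq (ι := s) (by rw [Fintype.card_coe, hs]) Subtype.val_injective
          fun y v => h v ^ #{i | g i = y}
    _ = #F * ∏ y ∈ univ.image g, (∑ v, h v ^ #{i | g i = y}) / 2 ^ q := by
        rw [hextend (fun y m => (∑ v, h v ^ m) / 2 ^ q) fun _ => by simp]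

theorem sum_prod_centeredIndicator_le (hF : TwiseIndep p q n F) (hn : n ≤ 2 ^ p) {ι : Type*}
    [Fintype ι] (hι : Fintype.card ι ≤ n) (z : BS q) (g : ι → BS p) :
    ∑ f ∈ F, ∏ i, centeredIndicator q z (f (g i)) ≤
      #F * if ∀ y, #{i | g i = y} ≠ 1 then (2 ^ q : ℝ)⁻¹ ^ #(univ.image g) else 0 := by
  rw [hF.sum_prod_comp_eq hn g (card_image_le.trans (by simpa using hι))]
  refine mul_le_mul_of_nonneg_left ?_ (Nat.cast_nonneg _)
  change ∏ y ∈ univ.image g, centeredMoment q z #{i | g i = y} ≤ _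
  split_ifs with hg
  · calc ∏ y ∈ univ.image g, centeredMoment q z #{i | g i = y}
        ≤ ∏ y ∈ univ.image g, |centeredMoment q z #{i | g i = y}| :=
          (le_abs_self _).trans (abs_prod _ _).le
      _ ≤ ∏ _y ∈ univ.image g, (2 ^ q : ℝ)⁻¹ :=
          prod_le_prod (fun _ _ => abs_nonneg _)
            fun y hy => abs_centeredMoment_le z (one_le_card_fiber_of_mem_image hy)
      _ = (2 ^ q : ℝ)⁻¹ ^ #(univ.image g) := prod_const _
  · push Not at hg
    obtain ⟨y, hy⟩ := hg
    have hmem : y ∈ univ.image g := by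
      obtain ⟨i, hi⟩ := card_pos.mp (hy.symm ▸ Nat.one_pos : 0 < #{i | g i = y})
      exact mem_image.mpr ⟨i, mem_univ _, (mem_filter.mp hi).2⟩
    rw [prod_eq_zero hmem (by rw [hy, centeredMoment_one])]

theorem sum_pow_push_sub_unif_le {t : ℕ} (hF : TwiseIndep p q (2 * t) F) (h2t : 2 * t ≤ 2 ^ p)
    {Y : BS p → ℝ} (hY : IsDist Y) (z : BS q) :
    ∑ f ∈ F, (push f Y z - unif q z) ^ (2 * t) ≤
      #F * ∑ g : Fin (2 * t) → BS p with ∀ y, #{i | g i = y} ≠ 1,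
        (∏ i, Y (g i)) * (2 ^ q : ℝ)⁻¹ ^ #(univ.image g) := by
  calc ∑ f ∈ F, (push f Y z - unif q z) ^ (2 * t)
      = ∑ g : Fin (2 * t) → BS p, (∏ i, Y (g i)) *
          ∑ f ∈ F, ∏ i, centeredIndicator q z (f (g i)) := by
        simp_rw [push_sub_unif_eq_sum z _ hY.2, Fintype.sum_pow, mul_sum, ← prod_mul_distrib]
        exact sum_comm
    _ ≤ ∑ g : Fin (2 * t) → BS p, (∏ i, Y (g i)) *
          (#F * if ∀ y, #{i | g i = y} ≠ 1 then (2 ^ q : ℝ)⁻¹ ^ #(univ.image g) else 0) :=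
        sum_le_sum fun g _ => mul_le_mul_of_nonneg_left
          (hF.sum_prod_centeredIndicator_le h2t (by simp) z g)
          (prod_nonneg fun i _ => hY.1 (g i))
    _ = _ := by
        rw [sum_filter, mul_sum]
        refine sum_congr rfl fun g _ => ?_
        split_ifs <;> ring

theorem card_filter_lt_abs_push_sub_unif_le {t : ℕ} (hF : TwiseIndep p q (2 * t) F)
    (h2t : 2 * t ≤ 2 ^ p) {Y : BS p → ℝ} (hY : IsDist Y) {N : ℝ} (hN : ∀ y, Y y ≤ N)
    (hNμ : 2 * t * N ≤ (2 ^ q)⁻¹) {δ : ℝ} (hδ : 0 ≤ δ) (z : BS q) :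
    #(F.filter fun f => δ < |push f Y z - unif q z|) * δ ^ (2 * t) ≤
      #F * (2 ^ (2 * t) * ((2 ^ q)⁻¹ ^ t * (2 * t * N) ^ t)) :=
  calc #(F.filter fun f => δ < |push f Y z - unif q z|) * δ ^ (2 * t)
      ≤ ∑ f ∈ F, (push f Y z - unif q z) ^ (2 * t) :=
        card_filter_lt_abs_mul_pow_le F (fun f => push f Y z - unif q z) hδ t
    _ ≤ _ := hF.sum_pow_push_sub_unif_le h2t hY z
    _ ≤ _ := mul_le_mul_of_nonneg_left
        (sum_prod_mul_pow_card_image_le (by simp) hY hN hNμ) (Nat.cast_nonneg _)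

theorem card_filter_not_statDist_le {t : ℕ} (hF : TwiseIndep p q (2 * t) F) (htq : q ≤ t)
    {Y : BS p → ℝ} (hY : IsDist Y) {N ε : ℝ} (hN : ∀ y, Y y ≤ N) (hε : 0 < ε) (hε1 : ε ≤ 1)
    (hNε : 32 * t * N ≤ ε ^ 2 * (2 ^ q)⁻¹) :
    (#(F.filter fun f => ¬ statDist (push f Y) (unif q) ≤ ε) : ℝ) ≤ #F * (2 ^ t)⁻¹ := by
  set μ : ℝ := (2 ^ q)⁻¹
  set δ := 2 * ε * μ
  set C := 2 ^ (2 * t) * (μ ^ t * (2 * t * N) ^ t)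
  have hμ : 0 < μ := by positivity
  have hμ1 : μ ≤ 1 := inv_le_one_of_one_le₀ (one_le_pow₀ one_le_two)
  have hδ : 0 < δ := by positivity
  have hN0 : 0 ≤ N := hY.nonneg_of_le hN
  have hNμ : 2 * t * N ≤ μ := by nlinarith [pow_le_one₀ hε.le hε1 (n := 2)]
  have h2t : 2 * t ≤ 2 ^ p := by
    have hN1 := hY.one_le_card_mul_of_le hN
    rw [card_BS] at hN1
    push_cast at hN1
    exact_mod_cast (show (2 * t : ℝ) ≤ 2 ^ p by nlinarith)
  have hδε : Fintype.card (BS q) * δ / 2 = ε := by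
    simp only [card_BS, δ, μ, Nat.cast_pow, Nat.cast_ofNat]
    field_simp
  calc (#(F.filter fun f => ¬ statDist (push f Y) (unif q) ≤ ε) : ℝ)
      ≤ ∑ z, (#(F.filter fun f => δ < |push f Y z - unif q z|) : ℝ) := by
        exact_mod_cast card_filter_not_statDist_le_le_sum F (fun f => push f Y) (unif q) hδε.le
    _ ≤ ∑ _z : BS q, #F * C / δ ^ (2 * t) :=
        sum_le_sum fun z _ => (le_div_iff₀ (by positivity)).mpr
          (hF.card_filter_lt_abs_push_sub_unif_le h2t hY hN hNμ hδ.le z)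
    _ = #F * (2 ^ q * C / δ ^ (2 * t)) := by
        rw [sum_const, card_univ, card_BS, nsmul_eq_mul]
        push_cast
        ring
    _ ≤ #F * (2 ^ t)⁻¹ := by
        refine mul_le_mul_of_nonneg_left ((div_le_iff₀ (by positivity)).mpr ?_) (Nat.cast_nonneg _)
        exact two_pow_mul_pow_le_of_sixteen_mul_le htq hμ.le (by positivity) (by nlinarith)

end TwiseIndep

theorem twise_function_extracts_general
    (p q t : ℕ) (k ε : ℝ) (Y : BS p → ℝ)
    (hY : IsDist Y) (hsrc : ∀ y, Y y ≤ (2:ℝ) ^ (-k)) (hε : 0 < ε)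
    (ht : 0 < t) (htq : q ≤ t)
    (hk : (q:ℝ) ≤ k - Real.logb 2 (t:ℝ) - 2 * Real.logb 2 (1 / ε) - 5)
    (F : Finset (BS p → BS q)) (hF : TwiseIndep p q (2 * t) F) :
    1 - (2:ℝ) ^ (-(t:ℝ)) ≤
      ((F.filter (fun f => statDist (push f Y) (unif q) ≤ ε)).card : ℝ) /
        (F.card : ℝ) := by
  refine one_sub_le_card_filter_div _ hF.1 ?_
  rw [Real.rpow_neg two_pos.le, Real.rpow_natCast]
  rcases le_or_gt ε 1 with hε1 | hε1
  · exact hF.card_filter_not_statDist_le htq hY hsrc hε hε1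
      (mul_rpow_neg_le_of_le_sub_logb hε ht hk)
  · have hgood : ∀ f, statDist (push f Y) (unif q) ≤ ε := fun f =>
      (statDist_le_one (isDist_push hY f) (isDist_unif q)).trans hε1.le
    simp [hgood]

/-- A function sampled from a `2t`-wise independent family with
`q ≤ k - log₂ t - 2·log₂(1/ε) - 5` and `t ≥ q` extracts from a fixed `(p,k)`-source `Y`
with error `ε`, with probability at least `1 - 2^{-t}` over the choice of `f`. -/
theorem twise_function_extracts
    (p q t : ℕ) (k ε : ℝ) (Y : BS p → ℝ)
    (hY : IsDist Y) (hsrc : ∀ y, Y y ≤ (2:ℝ) ^ (-k)) (hε : 0 < ε)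
    (hq : 0 < q) (ht : 0 < t) (htq : q ≤ t)
    (hk : (q:ℝ) ≤ k - Real.logb 2 (t:ℝ) - 2 * Real.logb 2 (1 / ε) - 5)
    (F : Finset (BS p → BS q)) (hF : TwiseIndep p q (2 * t) F) :
    1 - (2:ℝ) ^ (-(t:ℝ)) ≤
      ((F.filter (fun f => statDist (push f Y) (unif q) ≤ ε)).card : ℝ) /
        (F.card : ℝ) :=
  twise_function_extracts_general p q t k ε Y hY hsrc hε ht htq hk F hF
end

section
/- Suppose that every (t=2, n, ε)-secret sharing scheme for b-bit messages using d bits of randomness requires a (δ,m)-extractable class of randomness sources (i.e., for every such scheme (Sh, Rec, 𝒴), the class 𝒴 is (δ,m)-extractable). Then, for all positive integers t' ≤ n' with n ≤ binomial(n', t'−1), every (t', n', ε)-secret sharing scheme for b-bit messages using d bits of randomness also requires a (δ,m)-extractable class of randomness sources. -/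
open Finset
open scoped Classical

/-- A class `𝒴` of randomness sources over `{0,1}^d` is `(δ, m)`-extractable if some
deterministic function `ext` maps every source in `𝒴` to within statistical distance `δ`
of uniform on `{0,1}^m`. -/
def Extractable (d m : ℕ) (𝒴 : Set (BS d → ℝ)) (δ : ℝ) : Prop :=
  ∃ ext : BS d → BS m, ∀ Y ∈ 𝒴, statDist (push ext Y) (unif m) ≤ δ

/-- `(Sh, Rec, 𝒴)` is a `(t, n, ε)`-secret sharing scheme for `b`-bit messages using
`d` bits of randomness, with shares in `{0,1}^ℓ`.  The restriction of the shares to a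
subset `T ⊆ [n]` is modelled by masking the shares outside `T` with `none`. -/
def IsSS (t n b d ℓ : ℕ) (Sh : BS b → BS d → Fin n → BS ℓ)
    (Rec : (Fin n → Option (BS ℓ)) → BS b) (𝒴 : Set (BS d → ℝ)) (ε : ℝ) : Prop :=
  (∀ Y ∈ 𝒴, IsDist Y) ∧
  -- correctness on authorized sets
  (∀ Y ∈ 𝒴, ∀ T : Finset (Fin n), t ≤ T.card →
    ∀ x : BS b, ∀ y : BS d, 0 < Y y →
      Rec (fun i => if i ∈ T then some (Sh x y i) else none) = x) ∧
  -- secrecy on unauthorized sets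
  (∀ Y ∈ 𝒴, ∀ T : Finset (Fin n), T.card < t → ∀ x x' : BS b,
    statDist (push (fun y => (fun i => if i ∈ T then some (Sh x y i) else none)) Y)
             (push (fun y => (fun i => if i ∈ T then some (Sh x' y i) else none)) Y) ≤ ε)

/- ## Auxiliary lemmas -/

lemma statDist_nonneg' {S : Type*} [Fintype S] (p q : S → ℝ) : 0 ≤ statDist p q := by
  unfold statDist
  positivity

lemma push_comp' {S T U : Type*} [Fintype S] [Fintype T] [DecidableEq T] [DecidableEq U]
    (f : S → T) (g : T → U) (p : S → ℝ) :
    push g (push f p) = push (g ∘ f) p := by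
  funext u
  unfold push
  calc (∑ t, if g t = u then ∑ s, if f s = t then p s else 0 else 0)
      = ∑ t, ∑ s, if g t = u then (if f s = t then p s else 0) else 0 := by
        refine Finset.sum_congr rfl fun t _ => ?_
        split_ifs with h
        · rfl
        · simp
    _ = ∑ s, ∑ t, if g t = u then (if f s = t then p s else 0) else 0 :=
        Finset.sum_comm
    _ = ∑ s, if g (f s) = u then p s else 0 := by
        refine Finset.sum_congr rfl fun s _ => ?_
        rw [Finset.sum_eq_single (f s)]
        · simp
        · intro t _ ht
          have hne : ¬ f s = t := fun h => ht h.symm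
          simp [hne]
        · simp

lemma statDist_push_le' {S T : Type*} [Fintype S] [Fintype T] [DecidableEq T]
    (g : S → T) (p q : S → ℝ) :
    statDist (push g p) (push g q) ≤ statDist p q := by
  unfold statDist
  gcongr ?_ / 2
  have key : ∀ t, |push g p t - push g q t| ≤ ∑ s, if g s = t then |p s - q s| else 0 := by
    intro t
    unfold push
    rw [← Finset.sum_sub_distrib]
    refine (Finset.abs_sum_le_sum_abs _ _).trans ?_
    refine Finset.sum_le_sum fun s _ => ?_
    split_ifs with h <;> simp
  calc (∑ t, |push g p t - push g q t|)
      ≤ ∑ t, ∑ s, if g s = t then |p s - q s| else 0 :=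
        Finset.sum_le_sum fun t _ => key t
    _ = ∑ s, ∑ t, if g s = t then |p s - q s| else 0 := Finset.sum_comm
    _ = ∑ s, |p s - q s| := by
        refine Finset.sum_congr rfl fun s _ => ?_
        rw [Finset.sum_ite_eq]
        simp

/-- Encode a tuple of `n'` strings of length `ℓ'` into one string of length `n' * ℓ'`. -/
noncomputable def enc (n' ℓ' : ℕ) (f : Fin n' → BS ℓ') : BS (n' * ℓ') :=
  fun k => f (finProdFinEquiv.symm k).1 (finProdFinEquiv.symm k).2

noncomputable def dec (n' ℓ' : ℕ) (w : BS (n' * ℓ')) : Fin n' → BS ℓ' :=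
  fun j c => w (finProdFinEquiv (j, c))

lemma dec_enc (n' ℓ' : ℕ) (f : Fin n' → BS ℓ') : dec n' ℓ' (enc n' ℓ' f) = f := by
  funext j c
  simp [dec, enc]

/-- If every `(2,n,ε)`-secret sharing scheme for `b`-bit messages using `d` bits of
randomness requires a `(δ,m)`-extractable class of sources, then so does every
`(t',n',ε)`-secret sharing scheme for `b`-bit messages using `d` bits of randomness
whenever `n ≤ binomial(n', t'-1)`. -/
theorem randomless_reduction_from_two_out_of_n
    (n b d m : ℕ) (ε δ : ℝ) (hn : 0 < n)
    (hreq : ∀ (ℓ : ℕ) (Sh : BS b → BS d → Fin n → BS ℓ)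
      (Rec : (Fin n → Option (BS ℓ)) → BS b) (𝒴 : Set (BS d → ℝ)),
      IsSS 2 n b d ℓ Sh Rec 𝒴 ε → Extractable d m 𝒴 δ) :
    ∀ t' n' : ℕ, 0 < t' → t' ≤ n' → n ≤ Nat.choose n' (t' - 1) →
      ∀ (ℓ' : ℕ) (Sh' : BS b → BS d → Fin n' → BS ℓ')
        (Rec' : (Fin n' → Option (BS ℓ')) → BS b) (𝒴' : Set (BS d → ℝ)),
        IsSS t' n' b d ℓ' Sh' Rec' 𝒴' ε → Extractable d m 𝒴' δ := by
  intro t' n' ht' htn hnle ℓ' Sh' Rec' 𝒴' hSS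
  obtain ⟨hdist, hcor, hsec⟩ := hSS
  -- an embedding of `Fin n` into the `(t'-1)`-subsets of `Fin n'`
  have hcard : Fintype.card (Fin n) ≤
      Fintype.card { A : Finset (Fin n') // A.card = t' - 1 } := by
    rw [Fintype.card_fin, Fintype.card_finset_len, Fintype.card_fin]
    exact hnle
  obtain ⟨σ⟩ := Function.Embedding.nonempty_of_card_le hcard
  -- the new sharing function
  set Sh : BS b → BS d → Fin n → BS (n' * ℓ') := fun x y i =>
    enc n' ℓ' (fun j => if j ∈ (σ i).1 then Sh' x y j else fun _ => false) with hSh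
  set Rec : (Fin n → Option (BS (n' * ℓ'))) → BS b := fun v =>
    Rec' (fun j => if h : ∃ i : Fin n, j ∈ (σ i).1 ∧ (v i).isSome then
        some (dec n' ℓ' ((v h.choose).get h.choose_spec.2) j) else none) with hRec
  apply hreq (n' * ℓ') Sh Rec 𝒴'
  refine ⟨hdist, ?_, ?_⟩
  · -- correctness
    intro Y hY T hT x y hy
    set v : Fin n → Option (BS (n' * ℓ')) :=
      fun i => if i ∈ T then some (Sh x y i) else none with hv
    set T'' : Finset (Fin n') := T.biUnion (fun i => (σ i).1) with hT''
    have hfun : (fun j => if h : ∃ i : Fin n, j ∈ (σ i).1 ∧ (v i).isSome then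
        some (dec n' ℓ' ((v h.choose).get h.choose_spec.2) j) else none)
        = fun j => if j ∈ T'' then some (Sh' x y j) else none := by
      funext j
      by_cases h : ∃ i : Fin n, j ∈ (σ i).1 ∧ (v i).isSome
      · rw [dif_pos h]
        obtain ⟨hjσ, hsome⟩ := h.choose_spec
        have hiT : h.choose ∈ T := by
          by_contra hiT
          have hvn : v h.choose = none := if_neg hiT
          rw [hvn] at hsome
          simp at hsome
        have hvv : v h.choose = some (Sh x y h.choose) := if_pos hiT
        have hget : (v h.choose).get h.choose_spec.2 = Sh x y h.choose :=
          Option.get_of_mem _ hvv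
        have hjT'' : j ∈ T'' := Finset.mem_biUnion.mpr ⟨h.choose, hiT, hjσ⟩
        rw [if_pos hjT'', hget, hSh]
        simp only
        rw [dec_enc]
        simp [hjσ]
      · rw [dif_neg h]
        have hjT'' : j ∉ T'' := by
          intro hj
          obtain ⟨i, hiT, hjσ⟩ := Finset.mem_biUnion.mp hj
          exact h ⟨i, hjσ, by
            have : v i = some (Sh x y i) := if_pos hiT
            rw [this]; rfl⟩
        rw [if_neg hjT'']
    have hcardT'' : t' ≤ T''.card := by
      obtain ⟨a, haT, c, hcT, hac⟩ := Finset.one_lt_card.mp hT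
      have hσne : (σ a).1 ≠ (σ c).1 := fun h =>
        hac (σ.injective (Subtype.ext h))
      have hsub : (σ a).1 ∪ (σ c).1 ⊆ T'' :=
        Finset.union_subset
          (Finset.subset_biUnion_of_mem (fun i => (σ i).1) haT)
          (Finset.subset_biUnion_of_mem (fun i => (σ i).1) hcT)
      have ha2 : (σ a).1.card = t' - 1 := (σ a).2
      have hc2 : (σ c).1.card = t' - 1 := (σ c).2
      have h1 : (σ a).1.card ≤ ((σ a).1 ∪ (σ c).1).card :=
        Finset.card_le_card Finset.subset_union_left
      have h2 : ((σ a).1 ∪ (σ c).1).card ≠ t' - 1 := by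
        intro hc
        have ha : (σ a).1 = (σ a).1 ∪ (σ c).1 :=
          Finset.eq_of_subset_of_card_le Finset.subset_union_left (by omega)
        have hb : (σ c).1 = (σ a).1 ∪ (σ c).1 :=
          Finset.eq_of_subset_of_card_le Finset.subset_union_right (by omega)
        exact hσne (ha.trans hb.symm)
      have h3 : t' ≤ ((σ a).1 ∪ (σ c).1).card := by omega
      exact h3.trans (Finset.card_le_card hsub)
    rw [hRec]
    simp only
    rw [hfun]
    exact hcor Y hY T'' hcardT'' x y hy
  · -- secrecy
    intro Y hY T hT x x'
    set T'' : Finset (Fin n') := T.biUnion (fun i => (σ i).1) with hT''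
    have hcardT'' : T''.card < t' := by
      have h1 : T''.card ≤ ∑ i ∈ T, (σ i).1.card := Finset.card_biUnion_le
      have h2 : ∑ i ∈ T, (σ i).1.card = T.card * (t' - 1) := by
        rw [Finset.sum_congr rfl (fun i _ => (σ i).2), Finset.sum_const, smul_eq_mul]
      have h3 : T.card ≤ 1 := by omega
      have : T.card * (t' - 1) ≤ t' - 1 := by
        calc T.card * (t' - 1) ≤ 1 * (t' - 1) := Nat.mul_le_mul_right _ h3
          _ = t' - 1 := one_mul _
      omega
    -- the post-processing function
    set g : (Fin n' → Option (BS ℓ')) → (Fin n → Option (BS (n' * ℓ'))) := fun u k =>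
      if k ∈ T then some (enc n' ℓ' (fun j =>
        if j ∈ (σ k).1 then (u j).getD (fun _ => false) else fun _ => false))
      else none with hg
    have hpush : ∀ z : BS b,
        (fun y => (fun i => if i ∈ T then some (Sh z y i) else none))
        = g ∘ (fun y => (fun j => if j ∈ T'' then some (Sh' z y j) else none)) := by
      intro z
      funext y
      funext k
      simp only [Function.comp_apply, hg]
      by_cases hk : k ∈ T
      · rw [if_pos hk, if_pos hk]
        simp only [hSh]
        have harg : (fun j => if j ∈ (σ k).1 then Sh' z y j else (fun _ => false : BS ℓ'))
            = (fun j => if j ∈ (σ k).1 then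
                ((if j ∈ T'' then some (Sh' z y j) else none).getD (fun _ => false))
              else (fun _ => false : BS ℓ')) := by
          funext j
          by_cases hj : j ∈ (σ k).1
          · have hjT'' : j ∈ T'' := Finset.mem_biUnion.mpr ⟨k, hk, hj⟩
            simp [hj, hjT'']
          · simp [hj]
        rw [harg]
      · rw [if_neg hk, if_neg hk]
    rw [hpush x, hpush x', ← push_comp', ← push_comp']
    calc statDist (push g (push (fun y j => if j ∈ T'' then some (Sh' x y j) else none) Y))
          (push g (push (fun y j => if j ∈ T'' then some (Sh' x' y j) else none) Y))
        ≤ statDist (push (fun y j => if j ∈ T'' then some (Sh' x y j) else none) Y)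
          (push (fun y j => if j ∈ T'' then some (Sh' x' y j) else none) Y) :=
          statDist_push_le' _ _ _
      _ ≤ ε := hsec Y hY T'' hcardT'' x x'
end
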